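/- arXiv:1312.3685 — 5 statements merged into one kernel-verified Lean document; each statement's English description precedes it below -/
import Mathlib

section
/- For every δ > 0 and every c > 0 there exists a twice continuously differentiable function û : ℝ → ℝ satisfying δû''(z) + cû'(z) + û(z)(1 − û(z)) = 0 for all z ∈ ℝ, with lim_{z→−∞} (û(z), û'(z)) = (1, 0) and lim_{z→+∞} (û(z), û'(z)) = (0, 0). That is, for every positive speed c there is a heteroclinic orbit of the F-KPP travelling-wave system connecting the equilibrium (1,0) to the equilibrium (0,0). -/
/-!
By the rescaling `z ↦ z / √δ` it suffices to take `δ = 1`. In the phase plane the wave is an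
orbit of `(u, y)' = (y, -c y - u (1 - u))` from the saddle `(1, 0)` to `(0, 0)`.

Backward in time, the flow leaves a thin sector `a w < -y < b w` (`w = 1 - u`) at the saddle
transversally through either slanted edge. Shooting from a segment across the sector whose two
ends leave through different edges, the parameters leaving through each edge form disjoint open
sets, so by connectedness some orbit never leaves the sector (Ważewski's principle); inside it
`w` decays exponentially, so that orbit tends to the saddle.

Forward in time the energy `E = y² / 2 + u² / 2 - u³ / 3` decreases at rate `c y²`. The shooting
segment lies in the well `{E < 1/6, |u| < 1}` of the origin, which is therefore invariant.
Barbalat's lemma, applied to `E` and then to `y`, gives `y → 0` and `u (1 - u) → 0`, and `u`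
stays away from `1`, so `u → 0`.

To have global solutions, the field is replaced outside the square `[-1, 1]²` by a globally
Lipschitz and bounded one; the orbits above never leave that square.
-/

open Set Filter Topology Metric Function
open scoped NNReal

section ODE

variable {E : Type*} [NormedAddCommGroup E] [NormedSpace ℝ E] {v : E → E} {K M : ℝ≥0}

theorem exists_forall_hasDerivAt_of_lipschitzWith [CompleteSpace E] (hv : LipschitzWith K v)
    (hM : ∀ x, ‖v x‖ ≤ M) (x₀ : E) : ∃ α : ℝ → E, α 0 = x₀ ∧ ∀ t, HasDerivAt α (v (α t)) t := by
  have hlocal (n : ℕ) : ∃ α : ℝ → E, α 0 = x₀ ∧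
      ∀ t ∈ Ioo (-(n + 1 : ℝ)) (n + 1), HasDerivAt α (v (α t)) t := by
    have h0 : (0 : ℝ) ∈ Icc (-(n + 1 : ℝ)) (n + 1) := ⟨by linarith, by linarith⟩
    obtain ⟨α, hα0, hα⟩ := (IsPicardLindelof.of_time_independent (t₀ := ⟨0, h0⟩) (x₀ := x₀)
      (a := M * (n + 1)) (r := 0) (fun x _ => hM x) hv.lipschitzOnWith
      (by simp)).exists_eq_forall_mem_Icc_hasDerivWithinAt₀
    exact ⟨α, hα0, fun t ht =>
      (hα t (Ioo_subset_Icc_self ht)).hasDerivAt (Icc_mem_nhds ht.1 ht.2)⟩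
  choose F hF0 hF using hlocal
  have hagree (m n : ℕ) (hmn : m ≤ n) : EqOn (F m) (F n) (Ioo (-(m + 1 : ℝ)) (m + 1)) := by
    have hmn' : (m : ℝ) ≤ n := Nat.cast_le.2 hmn
    exact ODE_solution_unique_of_mem_Ioo (v := fun _ => v) (s := fun _ => univ)
      (fun _ _ => hv.lipschitzOnWith) (t₀ := 0) ⟨by linarith, by linarith⟩
      (fun t ht => ⟨hF m t ht, trivial⟩)
      (fun t ht => ⟨hF n t ⟨by linarith [ht.1], by linarith [ht.2]⟩, trivial⟩)
      ((hF0 m).trans (hF0 n).symm)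
  have hagree' (m n : ℕ) {t : ℝ} (hm : t ∈ Ioo (-(m + 1 : ℝ)) (m + 1))
      (hn : t ∈ Ioo (-(n + 1 : ℝ)) (n + 1)) : F m t = F n t := by
    rcases le_total m n with h | h
    · exact hagree m n h hm
    · exact (hagree n m h hn).symm
  have hmem (t : ℝ) : t ∈ Ioo (-(⌊|t|⌋₊ + 1 : ℝ)) (⌊|t|⌋₊ + 1) := by
    have := Nat.lt_floor_add_one |t|
    exact ⟨by linarith [neg_abs_le t], by linarith [le_abs_self t]⟩
  refine ⟨fun t => F ⌊|t|⌋₊ t, hF0 _, fun t => ?_⟩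
  have hev : (fun s => F ⌊|s|⌋₊ s) =ᶠ[𝓝 t] F ⌊|t|⌋₊ :=
    eventually_of_mem (Ioo_mem_nhds (hmem t).1 (hmem t).2) fun s hs => hagree' _ _ (hmem s) hs
  simpa only [hev.eq_of_nhds] using (hF _ t (hmem t)).congr_of_eventuallyEq hev

theorem dist_le_mul_exp_abs_of_forall_hasDerivAt (hv : LipschitzWith K v) {α β : ℝ → E}
    (hα : ∀ t, HasDerivAt α (v (α t)) t) (hβ : ∀ t, HasDerivAt β (v (β t)) t) (t : ℝ) :
    dist (α t) (β t) ≤ dist (α 0) (β 0) * Real.exp (K * |t|) := by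
  have forward (v : E → E) (hv : LipschitzWith K v) (α β : ℝ → E)
      (hα : ∀ t, HasDerivAt α (v (α t)) t) (hβ : ∀ t, HasDerivAt β (v (β t)) t) (t : ℝ)
      (ht : 0 ≤ t) : dist (α t) (β t) ≤ dist (α 0) (β 0) * Real.exp (K * t) := by
    simpa using dist_le_of_trajectories_ODE (v := fun _ => v) (fun _ => hv)
      (fun s _ => (hα s).continuousAt.continuousWithinAt) (fun s _ => (hα s).hasDerivWithinAt)
      (fun s _ => (hβ s).continuousAt.continuousWithinAt) (fun s _ => (hβ s).hasDerivWithinAt)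
      le_rfl t ⟨ht, le_rfl⟩
  rcases le_total 0 t with ht | ht
  · simpa [abs_of_nonneg ht] using forward v hv α β hα hβ t ht
  · have hrev {γ : ℝ → E} (hγ : ∀ t, HasDerivAt γ (v (γ t)) t) (s : ℝ) :
        HasDerivAt (fun s => γ (-s)) (-v (γ (-s))) s := by
      simpa [comp_def] using (hγ (-s)).scomp s (hasDerivAt_neg s)
    simpa [abs_of_nonpos ht] using
      forward (-v) hv.neg _ _ (hrev hα) (hrev hβ) (-t) (neg_nonneg.2 ht)

theorem lipschitzWith_of_forall_hasDerivAt (hM : ∀ x, ‖v x‖ ≤ M) {α : ℝ → E}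
    (hα : ∀ t, HasDerivAt α (v (α t)) t) : LipschitzWith M α :=
  lipschitzOnWith_univ.1 <| convex_univ.lipschitzOnWith_of_nnnorm_hasDerivWithin_le
    (fun t _ => (hα t).hasDerivWithinAt) fun t _ => by
      rw [← NNReal.coe_le_coe, coe_nnnorm]; exact hM _

theorem continuous_uncurry_of_forall_hasDerivAt (hv : LipschitzWith K v) (hM : ∀ x, ‖v x‖ ≤ M)
    {φ : E → ℝ → E} (hφ0 : ∀ x, φ x 0 = x) (hφ : ∀ x t, HasDerivAt (φ x) (v (φ x t)) t) :
    Continuous (uncurry φ) :=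
  continuous_prod_of_continuous_lipschitzWith' _ M
    (fun x => lipschitzWith_of_forall_hasDerivAt hM (hφ x)) fun t =>
    (LipschitzWith.of_dist_le_mul (K := (Real.exp (K * |t|)).toNNReal) fun x y => by
      rw [Real.coe_toNNReal _ (Real.exp_pos _).le, mul_comm]
      simpa only [hφ0, uncurry_apply_pair] using
        dist_le_mul_exp_abs_of_forall_hasDerivAt hv (hφ x) (hφ y) t).continuous

theorem contDiff_succ_of_forall_hasDerivAt {γ : ℝ → E} (hγ : ∀ t, HasDerivAt γ (v (γ t)) t) :
    ∀ n : ℕ, ContDiff ℝ n v → ContDiff ℝ (n + 1) γ := by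
  have hderiv : deriv γ = fun t => v (γ t) := funext fun t => (hγ t).deriv
  have hdiff : Differentiable ℝ γ := fun t => (hγ t).differentiableAt
  intro n
  induction n with
  | zero =>
    intro hv
    rw [Nat.cast_zero, zero_add, contDiff_one_iff_deriv, hderiv]
    exact ⟨hdiff, hv.continuous.comp hdiff.continuous⟩
  | succ n ih =>
    intro hv
    rw [contDiff_succ_iff_deriv, hderiv]
    exact ⟨hdiff, by simp, hv.comp (ih hv.of_succ)⟩

end ODE

section RealAnalysis

theorem HasDerivAt.fst {E F : Type*} [NormedAddCommGroup E] [NormedSpace ℝ E]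
    [NormedAddCommGroup F] [NormedSpace ℝ F] {γ : ℝ → E × F} {γ' : E × F} {t : ℝ}
    (h : HasDerivAt γ γ' t) : HasDerivAt (fun t => (γ t).1) γ'.1 t :=
  (ContinuousLinearMap.fst ℝ E F).hasFDerivAt.comp_hasDerivAt t h

theorem HasDerivAt.snd {E F : Type*} [NormedAddCommGroup E] [NormedSpace ℝ E]
    [NormedAddCommGroup F] [NormedSpace ℝ F] {γ : ℝ → E × F} {γ' : E × F} {t : ℝ}
    (h : HasDerivAt γ γ' t) : HasDerivAt (fun t => (γ t).2) γ'.2 t :=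
  (ContinuousLinearMap.snd ℝ E F).hasFDerivAt.comp_hasDerivAt t h

theorem forall_mem_of_forall_Ico_mem {X : Type*} [TopologicalSpace X] {γ : ℝ → X} {U : Set X}
    (hγ : Continuous γ) (hU : IsOpen U) (h0 : γ 0 ∈ U)
    (hstep : ∀ t > 0, (∀ σ ∈ Ico 0 t, γ σ ∈ U) → γ t ∈ closure U → γ t ∈ U) :
    ∀ t ≥ 0, γ t ∈ U := by
  by_contra! hbad
  set bad := {t : ℝ | 0 ≤ t ∧ γ t ∉ U}
  have hne : bad.Nonempty := hbad
  have hbdd : BddBelow bad := ⟨0, fun _ h => h.1⟩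
  have hT : sInf bad ∈ bad :=
    (isClosed_Ici.inter (hU.isClosed_compl.preimage hγ)).csInf_mem hne hbdd
  have hbefore : ∀ σ ∈ Ico 0 (sInf bad), γ σ ∈ U := fun σ hσ => by
    by_contra h
    exact (csInf_le hbdd ⟨hσ.1, h⟩).not_gt hσ.2
  have hpos : 0 < sInf bad := hT.1.lt_of_ne fun h => hT.2 (h ▸ h0)
  refine hT.2 (hstep _ hpos hbefore (mem_closure_of_tendsto
    (hγ.continuousAt.tendsto.mono_left (nhdsWithin_le_nhds (s := Iio (sInf bad)))) ?_))
  filter_upwards [Ioo_mem_nhdsLT hpos] with σ hσ using hbefore σ ⟨hσ.1.le, hσ.2⟩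

theorem HasDerivAt.eventually_lt_nhdsGT {f : ℝ → ℝ} {f' x : ℝ} (hf : HasDerivAt f f' x)
    (hf' : f' < 0) : ∀ᶠ z in 𝓝[>] x, f z < f x := by
  filter_upwards [(hasDerivAt_iff_tendsto_slope_left_right.1 hf).2.eventually (gt_mem_nhds hf'),
    self_mem_nhdsWithin] with z hz (hxz : x < z)
  rw [slope_def_field, div_neg_iff] at hz
  rcases hz with ⟨-, h⟩ | ⟨h, -⟩ <;> linarith

theorem le_mul_exp_of_hasDerivAt_le_mul {f f' : ℝ → ℝ} {K t : ℝ} (ht : 0 ≤ t)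
    (hf : ∀ σ, HasDerivAt f (f' σ) σ) (bound : ∀ σ ∈ Ico 0 t, f' σ ≤ K * f σ) :
    f t ≤ f 0 * Real.exp (K * t) := by
  simpa [gronwallBound_ε0] using le_gronwallBound_of_liminf_deriv_right_le (K := K) (ε := 0)
    (fun σ _ => (hf σ).continuousAt.continuousWithinAt)
    (fun σ _ r hr => (hf σ).hasDerivWithinAt.liminf_right_slope_le hr) le_rfl
    (fun σ hσ => by simpa using bound σ hσ) t ⟨ht, le_rfl⟩

/-- Barbalat's lemma. -/
theorem tendsto_zero_of_hasDerivAt_of_uniformContinuousOn {f g : ℝ → ℝ} {L : ℝ}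
    (hd : ∀ t ≥ 0, HasDerivAt f (g t) t) (hg : UniformContinuousOn g (Ici 0))
    (hf : Tendsto f atTop (𝓝 L)) : Tendsto g atTop (𝓝 0) := by
  rw [Metric.tendsto_atTop]
  intro ε hε
  obtain ⟨δ, hδ, hgδ⟩ := Metric.uniformContinuousOn_iff.1 hg (ε / 2) (half_pos hε)
  obtain ⟨N, hN⟩ := Metric.tendsto_atTop.1 hf (ε * δ / 8) (by positivity)
  refine ⟨max N 0, fun t ht => ?_⟩
  have ht0 : 0 ≤ t := le_of_max_le_right ht
  have htN : N ≤ t := le_of_max_le_left ht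
  obtain ⟨ξ, hξ, hslope⟩ := exists_hasDerivAt_eq_slope f g (by linarith : t < t + δ / 2)
    (fun τ hτ => (hd τ (ht0.trans hτ.1)).continuousAt.continuousWithinAt)
    (fun τ hτ => hd τ (ht0.trans hτ.1.le))
  have hξ_small : |g ξ| < ε / 2 := by
    have h1 := hN t htN
    have h2 := hN (t + δ / 2) (by linarith)
    rw [Real.dist_eq] at h1 h2
    rw [hslope, add_sub_cancel_left, abs_div, abs_of_pos (half_pos hδ), div_lt_iff₀ (half_pos hδ)]
    calc |f (t + δ / 2) - f t| ≤ |f (t + δ / 2) - L| + |f t - L| := by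
          simpa only [abs_sub_comm L] using abs_sub_le (f (t + δ / 2)) L (f t)
      _ < ε / 2 * (δ / 2) := by linarith
  have hclose : dist (g t) (g ξ) < ε / 2 :=
    hgδ t ht0 ξ (ht0.trans hξ.1.le) <| by
      rw [Real.dist_eq, abs_sub_lt_iff]; constructor <;> linarith [hξ.1, hξ.2]
  rw [Real.dist_eq] at hclose ⊢
  calc |g t - 0| ≤ |g t - g ξ| + |g ξ| := by simpa using abs_sub_le (g t) (g ξ) 0
    _ < ε := by linarith

theorem UniformContinuous.uniformContinuousOn_comp {X Y Z : Type*} [UniformSpace X]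
    [UniformSpace Y] [UniformSpace Z] {γ : X → Y} {h : Y → Z} {s : Set X} {K : Set Y}
    (hγ : UniformContinuous γ) (hK : IsCompact K) (hh : ContinuousOn h K) (hs : MapsTo γ s K) :
    UniformContinuousOn (fun x => h (γ x)) s :=
  (hK.uniformContinuousOn_of_continuous hh).comp hγ.uniformContinuousOn hs

theorem AntitoneOn.exists_tendsto_atTop {f : ℝ → ℝ} {m : ℝ} (hf : AntitoneOn f (Ici 0))
    (hm : ∀ t ≥ 0, m ≤ f t) : ∃ L, Tendsto f atTop (𝓝 L) := by
  have hanti : Antitone fun t => f (max t 0) := fun s t hst =>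
    hf (le_max_right s 0) (le_max_right t 0) (max_le_max_right 0 hst)
  refine ⟨_, (tendsto_atTop_ciInf hanti ⟨m, ?_⟩).congr' ?_⟩
  · rintro _ ⟨t, rfl⟩; exact hm _ (le_max_right t 0)
  · filter_upwards [eventually_ge_atTop 0] with t ht using by rw [max_eq_left ht]

end RealAnalysis

section Exit

variable {E : Type*} {f g : E → ℝ}

def ExitsThrough (f g : E → ℝ) (β : ℝ → E) : Prop :=
  ∃ τ ≥ 0, f (β τ) < 0 ∧ ∀ σ ∈ Icc 0 τ, 0 < g (β σ)

theorem ExitsThrough.not_swap {β : ℝ → E} (h : ExitsThrough f g β) : ¬ExitsThrough g f β := by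
  rintro ⟨τ', hτ', hg, hf⟩
  obtain ⟨τ, hτ, hfτ, hgτ⟩ := h
  rcases le_total τ τ' with h | h
  · exact (hf τ ⟨hτ, h⟩).not_gt hfτ
  · exact (hgτ τ' ⟨hτ', h⟩).not_gt hg

theorem ExitsThrough.of_eventually [TopologicalSpace E] {β : ℝ → E} (hβ : Continuous β)
    (hg : Continuous g) {T : ℝ} (hT : 0 ≤ T) (hgT : ∀ σ ∈ Icc 0 T, 0 < g (β σ))
    (hf : ∀ᶠ τ in 𝓝[>] T, f (β τ) < 0) :
    ExitsThrough f g β := by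
  obtain ⟨u, hTu, hu⟩ := exists_Ico_subset_of_mem_nhds
    ((hg.comp hβ).continuousAt.eventually (lt_mem_nhds (hgT T ⟨hT, le_rfl⟩))) ⟨T + 1, by linarith⟩
  obtain ⟨τ, hfτ, hτ⟩ := (hf.and (Ioo_mem_nhdsGT hTu)).exists
  refine ⟨τ, hT.trans hτ.1.le, hfτ, fun σ hσ => ?_⟩
  rcases le_or_gt σ T with h | h
  · exact hgT σ ⟨hσ.1, h⟩
  · exact hu ⟨h.le, hσ.2.trans_lt hτ.2⟩

theorem isOpen_setOf_exitsThrough [TopologicalSpace E] {X : Type*} [TopologicalSpace X]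
    {B : X → ℝ → E} (hB : Continuous (uncurry B)) (hf : Continuous f) (hg : Continuous g) :
    IsOpen {x | ExitsThrough f g (B x)} := by
  refine isOpen_iff_mem_nhds.2 fun x ⟨τ, hτ, hfτ, hgτ⟩ => ?_
  have hfx : ∀ᶠ y in 𝓝 x, f (B y τ) < 0 :=
    ((hf.comp hB).comp (continuous_id.prodMk continuous_const)).continuousAt.eventually
      (gt_mem_nhds hfτ)
  have hgx : ∀ᶠ y in 𝓝 x, ∀ σ ∈ Icc 0 τ, 0 < g (B y σ) :=
    isCompact_Icc.eventually_forall_of_forall_eventually fun σ hσ =>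
      (hg.comp hB).continuousAt.eventually (lt_mem_nhds (hgτ σ hσ))
  filter_upwards [hfx, hgx] with y hfy hgy using ⟨τ, hτ, hfy, hgy⟩

end Exit

section Field

def fkppField (c : ℝ) (p : ℝ × ℝ) : ℝ × ℝ := (p.2, -(c * p.2) - p.1 * (1 - p.1))

theorem mem_closedBall_zero_one_iff {p : ℝ × ℝ} :
    p ∈ closedBall (0 : ℝ × ℝ) 1 ↔ |p.1| ≤ 1 ∧ |p.2| ≤ 1 := by
  rw [mem_closedBall_zero_iff, norm_prod_le_iff, Real.norm_eq_abs, Real.norm_eq_abs]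

noncomputable def clampUnitBox (p : ℝ × ℝ) : ℝ × ℝ :=
  ((projIcc (-1) 1 (by norm_num) p.1 : ℝ), (projIcc (-1) 1 (by norm_num) p.2 : ℝ))

theorem clampUnitBox_mem (p : ℝ × ℝ) : clampUnitBox p ∈ closedBall (0 : ℝ × ℝ) 1 := by
  rw [mem_closedBall_zero_one_iff, abs_le, abs_le]
  exact ⟨(projIcc (-1 : ℝ) 1 (by norm_num) p.1).2, (projIcc (-1 : ℝ) 1 (by norm_num) p.2).2⟩

theorem clampUnitBox_of_mem {p : ℝ × ℝ} (hp : p ∈ closedBall (0 : ℝ × ℝ) 1) :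
    clampUnitBox p = p := by
  rw [mem_closedBall_zero_one_iff, abs_le, abs_le] at hp
  simp [clampUnitBox, projIcc_of_mem _ hp.1, projIcc_of_mem _ hp.2]

theorem lipschitzWith_clampUnitBox : LipschitzWith 1 clampUnitBox := by
  have h := (LipschitzWith.projIcc (by norm_num : (-1 : ℝ) ≤ 1))
  have h' := ((LipschitzWith.subtype_val _).comp (h.comp LipschitzWith.prod_fst)).prodMk
    ((LipschitzWith.subtype_val _).comp (h.comp LipschitzWith.prod_snd))
  rw [one_mul, one_mul, max_self] at h'
  exact h'

noncomputable def truncField (c : ℝ) (p : ℝ × ℝ) : ℝ × ℝ := fkppField c (clampUnitBox p)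

theorem truncField_of_mem {c : ℝ} {p : ℝ × ℝ} (hp : p ∈ closedBall (0 : ℝ × ℝ) 1) :
    truncField c p = fkppField c p := by
  rw [truncField, clampUnitBox_of_mem hp]

theorem exists_lipschitzWith_truncField (c : ℝ) : ∃ K, LipschitzWith K (truncField c) := by
  have hF : ContDiff ℝ 1 (fkppField c) := by unfold fkppField; fun_prop
  obtain ⟨K, hK⟩ := (hF.locallyLipschitz.locallyLipschitzOn (s := closedBall 0 1)
    ).exists_lipschitzOnWith_of_compact (isCompact_closedBall 0 1)
  exact ⟨K * 1, lipschitzOnWith_univ.1 <|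
    hK.comp lipschitzWith_clampUnitBox.lipschitzOnWith fun p _ => clampUnitBox_mem p⟩

theorem exists_norm_truncField_le (c : ℝ) : ∃ M : ℝ≥0, ∀ p, ‖truncField c p‖ ≤ M := by
  have hF : Continuous (fkppField c) := by unfold fkppField; fun_prop
  obtain ⟨M, hM⟩ := (isCompact_closedBall (0 : ℝ × ℝ) 1).exists_bound_of_continuousOn
    hF.continuousOn
  exact ⟨M.toNNReal, fun p => (hM _ (clampUnitBox_mem p)).trans (Real.le_coe_toNNReal M)⟩

end Field

section Saddle

/-- In the coordinates `w = 1 - u`, `y = u'`: the line `y = -s w` is `coneEdge s = 0`. -/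
def coneEdge (s : ℝ) (p : ℝ × ℝ) : ℝ := p.2 + s * (1 - p.1)

theorem continuous_coneEdge (s : ℝ) : Continuous (coneEdge s) := by unfold coneEdge; fun_prop

variable {c : ℝ} {β : ℝ → ℝ × ℝ}

theorem hasDerivAt_coneEdge_of_eq_zero (hβ : ∀ t, HasDerivAt β (-truncField c (β t)) t) {s t : ℝ}
    (hbox : β t ∈ closedBall (0 : ℝ × ℝ) 1) (hedge : coneEdge s (β t) = 0) :
    HasDerivAt (fun t => coneEdge s (β t))
      ((1 - (β t).1) * (1 - (1 - (β t).1) - c * s - s ^ 2)) t := by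
  have h := hβ t
  rw [truncField_of_mem hbox] at h
  refine (h.snd.add (h.fst.const_sub 1 |>.const_mul s)).congr_deriv ?_
  unfold coneEdge at hedge
  simp only [fkppField, Prod.snd_neg, Prod.fst_neg]
  linear_combination (c + s) * hedge

/-- A sector `a w < -y < b w`, `0 < w < η` at the saddle `(1, 0)` (coordinates `w = 1 - u`,
`y = u'`). By `η_lt` and `b_exit` the backward flow crosses both slanted edges outwards (see
`hasDerivAt_coneEdge_of_eq_zero`); by `energy` its shooting segment `w = η / 2` lies in the
potential well of the origin. -/
structure SaddleCone (c : ℝ) where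
  a : ℝ
  b : ℝ
  η : ℝ
  a_pos : 0 < a
  a_lt_b : a < b
  b_lt_one : b < 1
  η_pos : 0 < η
  η_le_one : η ≤ 1
  η_lt : η < 1 - c * a - a ^ 2
  b_exit : 1 - c * b - b ^ 2 < 0
  energy : b ^ 2 + η / 3 < 1

/-- The slopes bracket `μ`, the positive root of `μ² + c μ = 1`: the unstable direction of the
saddle is `y = -μ w`. -/
theorem SaddleCone.nonempty (hc : 0 < c) : Nonempty (SaddleCone c) := by
  set μ := (√(c ^ 2 + 4) - c) / 2
  have hsq : √(c ^ 2 + 4) ^ 2 = c ^ 2 + 4 := Real.sq_sqrt (by positivity)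
  have hroot : μ ^ 2 + c * μ = 1 := by simp only [μ]; nlinarith
  have hμ : 0 < μ := by
    have : c < √(c ^ 2 + 4) := Real.lt_sqrt_of_sq_lt (by linarith)
    simp only [μ]; linarith
  have hcμ : c * μ < 1 := by nlinarith
  have hb : √(1 - c * μ / 2) ^ 2 = 1 - c * μ / 2 := Real.sq_sqrt (by linarith)
  have hab : μ / 2 < √(1 - c * μ / 2) := Real.lt_sqrt_of_sq_lt (by nlinarith)
  have hb1 : √(1 - c * μ / 2) < 1 := (Real.sqrt_lt' one_pos).2 (by nlinarith)
  exact ⟨{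
    a := μ / 2
    b := √(1 - c * μ / 2)
    η := c * μ / 2
    a_pos := by positivity
    a_lt_b := hab
    b_lt_one := hb1
    η_pos := by positivity
    η_le_one := by linarith
    η_lt := by nlinarith
    b_exit := by nlinarith
    energy := by nlinarith }⟩

namespace SaddleCone

variable (P : SaddleCone c)

noncomputable def cone : Set (ℝ × ℝ) :=
  {p | 0 < 1 - p.1 ∧ 1 - p.1 < P.η ∧ 0 < -coneEdge P.a p ∧ 0 < coneEdge P.b p}

noncomputable def shoot (s : ℝ) : ℝ × ℝ := (1 - P.η / 2, -(s * (P.η / 2)))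

theorem isOpen_cone : IsOpen P.cone := by
  simp only [cone, coneEdge, ofPred_and]
  exact (isOpen_lt (by fun_prop) (by fun_prop)).inter <|
    (isOpen_lt (by fun_prop) (by fun_prop)).inter <|
    (isOpen_lt (by fun_prop) (by fun_prop)).inter (isOpen_lt (by fun_prop) (by fun_prop))

theorem closure_cone_subset : closure P.cone ⊆
    {p | 0 ≤ 1 - p.1 ∧ 1 - p.1 ≤ P.η ∧ 0 ≤ -coneEdge P.a p ∧ 0 ≤ coneEdge P.b p} := by
  refine closure_minimal (fun p ⟨h1, h2, h3, h4⟩ => ⟨h1.le, h2.le, h3.le, h4.le⟩) ?_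
  simp only [coneEdge, ofPred_and]
  exact (isClosed_le (by fun_prop) (by fun_prop)).inter <|
    (isClosed_le (by fun_prop) (by fun_prop)).inter <|
    (isClosed_le (by fun_prop) (by fun_prop)).inter (isClosed_le (by fun_prop) (by fun_prop))

theorem closure_cone_subset_closedBall : closure P.cone ⊆ closedBall (0 : ℝ × ℝ) 1 := by
  intro p hp
  obtain ⟨h1, h2, h3, h4⟩ := P.closure_cone_subset hp
  unfold coneEdge at h3 h4
  have := P.η_le_one; have := P.a_pos; have := P.a_lt_b; have := P.b_lt_one
  rw [mem_closedBall_zero_one_iff, abs_le, abs_le]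
  refine ⟨⟨by linarith, by linarith⟩, by nlinarith, by nlinarith⟩

theorem coneEdge_shoot (s' s : ℝ) : coneEdge s' (P.shoot s) = (s' - s) * (P.η / 2) := by
  simp only [coneEdge, shoot]; ring

theorem one_sub_shoot_fst (s : ℝ) : 1 - (P.shoot s).1 = P.η / 2 := by simp [shoot]

theorem shoot_mem_cone {s : ℝ} (hs : s ∈ Ioo P.a P.b) : P.shoot s ∈ P.cone := by
  have := P.η_pos
  refine ⟨by simp [shoot]; linarith, by simp [shoot]; linarith, ?_, ?_⟩
  · rw [P.coneEdge_shoot]; nlinarith [hs.1]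
  · rw [P.coneEdge_shoot]; nlinarith [hs.2]

theorem shoot_mem_closedBall {s : ℝ} (hs : s ∈ Icc P.a P.b) :
    P.shoot s ∈ closedBall (0 : ℝ × ℝ) 1 := by
  have := P.η_pos; have := P.η_le_one; have := P.a_pos; have := P.b_lt_one
  rw [mem_closedBall_zero_one_iff, abs_le, abs_le]
  simp only [shoot]
  refine ⟨⟨by linarith, by linarith⟩, by nlinarith [hs.1, hs.2], by nlinarith [hs.1, hs.2]⟩

section BackwardFlow

variable {P} (hβ : ∀ t, HasDerivAt β (-truncField c (β t)) t)
include hβ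

theorem exp_bounds_of_forall_mem_cone {t : ℝ} (ht : 0 ≤ t) (hin : ∀ σ ∈ Ico 0 t, β σ ∈ P.cone) :
    (1 - (β 0).1) * Real.exp (-P.b * t) ≤ 1 - (β t).1 ∧
      1 - (β t).1 ≤ (1 - (β 0).1) * Real.exp (-P.a * t) := by
  have hw (σ : ℝ) : HasDerivAt (fun σ => 1 - (β σ).1) (truncField c (β σ)).1 σ := by
    simpa using ((hβ σ).fst).const_sub 1
  have hy {σ : ℝ} (hσ : σ ∈ Ico 0 t) : (truncField c (β σ)).1 = (β σ).2 := by
    rw [truncField_of_mem (P.closure_cone_subset_closedBall (subset_closure (hin σ hσ)))]; rfl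
  constructor
  · have := le_mul_exp_of_hasDerivAt_le_mul (K := -P.b) ht (fun σ => (hw σ).neg) fun σ hσ => by
      have := (hin σ hσ).2.2.2
      simp only [coneEdge] at this; simp only [Pi.neg_apply, hy hσ]; linarith
    simp only [Pi.neg_apply] at this
    linarith
  · exact le_mul_exp_of_hasDerivAt_le_mul ht hw fun σ hσ => by
      have := (hin σ hσ).2.2.1; simp only [coneEdge] at this; rw [hy hσ]; linarith

theorem eventually_neg_coneEdge_a_neg {t : ℝ} (hbox : β t ∈ closedBall (0 : ℝ × ℝ) 1)
    (hw : 0 < 1 - (β t).1) (hwη : 1 - (β t).1 < P.η) (hedge : coneEdge P.a (β t) = 0) :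
    ∀ᶠ τ in 𝓝[>] t, -coneEdge P.a (β τ) < 0 := by
  have hd := (hasDerivAt_coneEdge_of_eq_zero hβ hbox hedge).neg
  have := P.η_lt
  simpa [hedge] using hd.eventually_lt_nhdsGT (by nlinarith)

theorem eventually_coneEdge_b_neg {t : ℝ} (hbox : β t ∈ closedBall (0 : ℝ × ℝ) 1)
    (hw : 0 < 1 - (β t).1) (hedge : coneEdge P.b (β t) = 0) :
    ∀ᶠ τ in 𝓝[>] t, coneEdge P.b (β τ) < 0 := by
  have hd := hasDerivAt_coneEdge_of_eq_zero hβ hbox hedge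
  have := P.b_exit
  simpa [hedge] using hd.eventually_lt_nhdsGT (by nlinarith)

theorem forall_mem_cone_of_not_exitsThrough (h0 : β 0 ∈ P.cone)
    (hlower : ¬ExitsThrough (fun p => -coneEdge P.a p) (coneEdge P.b) β)
    (hupper : ¬ExitsThrough (coneEdge P.b) (fun p => -coneEdge P.a p) β) :
    ∀ t ≥ 0, β t ∈ P.cone := by
  have hβc : Continuous β := Differentiable.continuous fun t => (hβ t).differentiableAt
  refine forall_mem_of_forall_Ico_mem hβc P.isOpen_cone h0 fun t ht hin hcl => ?_
  obtain ⟨hlow, hup⟩ := exp_bounds_of_forall_mem_cone hβ ht.le hin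
  have hw : 0 < 1 - (β t).1 := (mul_pos h0.1 (Real.exp_pos _)).trans_le hlow
  have hwη : 1 - (β t).1 < P.η := by
    have := Real.exp_le_one_iff.2 (by nlinarith [P.a_pos] : -P.a * t ≤ 0)
    nlinarith [h0.1, h0.2.1]
  have hbox := P.closure_cone_subset_closedBall hcl
  obtain ⟨-, -, ha, hb⟩ := P.closure_cone_subset hcl
  have hupto {g : ℝ × ℝ → ℝ} (hg : ∀ p ∈ P.cone, 0 < g p) (hgt : 0 < g (β t)) :
      ∀ σ ∈ Icc 0 t, 0 < g (β σ) := fun σ hσ =>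
    hσ.2.lt_or_eq.elim (fun h => hg _ (hin σ ⟨hσ.1, h⟩)) fun h => h ▸ hgt
  rcases ha.lt_or_eq with ha | ha
  · rcases hb.lt_or_eq with hb | hb
    · exact ⟨hw, hwη, ha, hb⟩
    · exact (hupper <| .of_eventually hβc (continuous_coneEdge _).neg ht.le
        (hupto (fun p hp => hp.2.2.1) ha) (P.eventually_coneEdge_b_neg hβ hbox hw hb.symm)).elim
  · have hbt : 0 < coneEdge P.b (β t) := by
      have := P.a_lt_b; simp only [coneEdge] at ha ⊢; nlinarith
    exact (hlower <| .of_eventually hβc (continuous_coneEdge _) ht.le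
      (hupto (fun p hp => hp.2.2.2) hbt)
      (P.eventually_neg_coneEdge_a_neg hβ hbox hw hwη (by linarith))).elim

theorem exitsThrough_of_eq_shoot_a (h0 : β 0 = P.shoot P.a) :
    ExitsThrough (fun p => -coneEdge P.a p) (coneEdge P.b) β := by
  have hβc : Continuous β := Differentiable.continuous fun t => (hβ t).differentiableAt
  have hw : 1 - (β 0).1 = P.η / 2 := by rw [h0, one_sub_shoot_fst]
  have := P.η_pos
  refine .of_eventually hβc (continuous_coneEdge _) le_rfl (fun σ hσ => ?_) <|
    P.eventually_neg_coneEdge_a_neg hβ (h0 ▸ P.shoot_mem_closedBall ⟨le_rfl, P.a_lt_b.le⟩)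
      (by linarith) (by linarith) (by rw [h0, coneEdge_shoot, sub_self, zero_mul])
  rw [le_antisymm hσ.2 hσ.1, h0, coneEdge_shoot]
  exact mul_pos (sub_pos.2 P.a_lt_b) (by linarith)

theorem exitsThrough_of_eq_shoot_b (h0 : β 0 = P.shoot P.b) :
    ExitsThrough (coneEdge P.b) (fun p => -coneEdge P.a p) β := by
  have hβc : Continuous β := Differentiable.continuous fun t => (hβ t).differentiableAt
  have hw : 1 - (β 0).1 = P.η / 2 := by rw [h0, one_sub_shoot_fst]
  have := P.η_pos
  refine .of_eventually hβc (continuous_coneEdge _).neg le_rfl (fun σ hσ => ?_) <|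
    P.eventually_coneEdge_b_neg hβ (h0 ▸ P.shoot_mem_closedBall ⟨P.a_lt_b.le, le_rfl⟩)
      (by linarith) (by rw [h0, coneEdge_shoot, sub_self, zero_mul])
  rw [le_antisymm hσ.2 hσ.1, h0, coneEdge_shoot]
  nlinarith [P.a_lt_b]

theorem tendsto_of_forall_mem_cone (hin : ∀ t ≥ 0, β t ∈ P.cone) :
    Tendsto β atTop (𝓝 (1, 0)) := by
  have hdecay : Tendsto (fun t => (1 - (β 0).1) * Real.exp (-P.a * t)) atTop (𝓝 0) := by
    simpa using (Real.tendsto_exp_neg_atTop_nhds_zero.comp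
      (tendsto_id.const_mul_atTop P.a_pos)).const_mul (1 - (β 0).1)
  have hw : Tendsto (fun t => 1 - (β t).1) atTop (𝓝 0) :=
    squeeze_zero' (eventually_atTop.2 ⟨0, fun t ht => (hin t ht).1.le⟩)
      (eventually_atTop.2 ⟨0, fun t ht =>
        (exp_bounds_of_forall_mem_cone hβ ht fun σ hσ => hin σ hσ.1).2⟩) hdecay
  have hy : Tendsto (fun t => (β t).2) atTop (𝓝 0) := by
    refine squeeze_zero_norm' (eventually_atTop.2 ⟨0, fun t ht => ?_⟩) hw
    obtain ⟨h1, -, h3, h4⟩ := hin t ht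
    have := P.a_pos; have := P.b_lt_one
    simp only [coneEdge] at h3 h4
    rw [Real.norm_eq_abs, abs_le]; constructor <;> nlinarith
  have hx : Tendsto (fun t => (β t).1) atTop (𝓝 1) := by
    simpa using (tendsto_const_nhds (x := (1 : ℝ))).sub hw
  simpa using hx.prodMk_nhds hy

end BackwardFlow

/-- Ważewski's principle. -/
theorem exists_forall_mem_cone {B : ℝ → ℝ → ℝ × ℝ}
    (hB : ∀ s t, HasDerivAt (B s) (-truncField c (B s t)) t)
    (hB0 : ∀ s, B s 0 = P.shoot s) (hBc : Continuous (uncurry B)) :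
    ∃ s ∈ Icc P.a P.b, ∀ t ≥ 0, B s t ∈ P.cone := by
  set W₁ := {s | ExitsThrough (fun p => -coneEdge P.a p) (coneEdge P.b) (B s)}
  set W₂ := {s | ExitsThrough (coneEdge P.b) (fun p => -coneEdge P.a p) (B s)}
  have ha : P.a ∈ W₁ := exitsThrough_of_eq_shoot_a (hB _) (hB0 _)
  have hb : P.b ∈ W₂ := exitsThrough_of_eq_shoot_b (hB _) (hB0 _)
  obtain ⟨s, hs, hsW⟩ : ∃ s ∈ Icc P.a P.b, s ∉ W₁ ∪ W₂ := by
    by_contra! hcover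
    obtain ⟨s, -, h₁, h₂⟩ := isPreconnected_Icc W₁ W₂
      (isOpen_setOf_exitsThrough hBc (continuous_coneEdge _).neg (continuous_coneEdge _))
      (isOpen_setOf_exitsThrough hBc (continuous_coneEdge _) (continuous_coneEdge _).neg) hcover
      ⟨P.a, ⟨le_rfl, P.a_lt_b.le⟩, ha⟩ ⟨P.b, ⟨P.a_lt_b.le, le_rfl⟩, hb⟩
    exact ExitsThrough.not_swap (f := fun p => -coneEdge P.a p) h₁ h₂
  have hs' : s ∈ Ioo P.a P.b :=
    ⟨hs.1.lt_of_ne (by rintro rfl; exact hsW (.inl ha)),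
      hs.2.lt_of_ne (by rintro rfl; exact hsW (.inr hb))⟩
  exact ⟨s, hs, forall_mem_cone_of_not_exitsThrough (hB s) (hB0 s ▸ P.shoot_mem_cone hs')
    (fun h => hsW (.inl h)) fun h => hsW (.inr h)⟩

end SaddleCone

end Saddle
section Well

noncomputable def fkppEnergy (p : ℝ × ℝ) : ℝ := p.2 ^ 2 / 2 + (p.1 ^ 2 / 2 - p.1 ^ 3 / 3)

/-- `1 / 6` is the energy of the saddle `(1, 0)`. -/
noncomputable def potentialWell : Set (ℝ × ℝ) := {p | -1 < p.1 ∧ p.1 < 1 ∧ fkppEnergy p < 1 / 6}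

theorem isOpen_potentialWell : IsOpen potentialWell := by
  simp only [potentialWell, fkppEnergy, ofPred_and]
  exact (isOpen_lt (by fun_prop) (by fun_prop)).inter <|
    (isOpen_lt (by fun_prop) (by fun_prop)).inter (isOpen_lt (by fun_prop) (by fun_prop))

theorem potentialWell_subset_closedBall : potentialWell ⊆ closedBall (0 : ℝ × ℝ) 1 := by
  rintro p ⟨h1, h2, hE⟩
  simp only [fkppEnergy] at hE
  rw [mem_closedBall_zero_one_iff, abs_le, abs_le]
  refine ⟨⟨h1.le, h2.le⟩, by nlinarith, by nlinarith⟩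

theorem mem_potentialWell_of_mem_closure {p : ℝ × ℝ} (hp : p ∈ closure potentialWell)
    (hE : fkppEnergy p < 1 / 6) : p ∈ potentialWell := by
  have hcl : closure potentialWell ⊆ {p : ℝ × ℝ | -1 ≤ p.1 ∧ p.1 ≤ 1} :=
    closure_minimal (fun p hp => ⟨hp.1.le, hp.2.1.le⟩) <| by
      simp only [ofPred_and]
      exact (isClosed_le (by fun_prop) (by fun_prop)).inter
        (isClosed_le (by fun_prop) (by fun_prop))
  obtain ⟨h1, h2⟩ := hcl hp
  simp only [fkppEnergy] at hE
  refine ⟨h1.lt_of_ne ?_, h2.lt_of_ne ?_, hE⟩ <;> rintro h <;> rw [← h] at hE <;>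
    nlinarith [sq_nonneg p.2]

theorem fkppEnergy_nonneg {p : ℝ × ℝ} (hp : p ∈ potentialWell) : 0 ≤ fkppEnergy p := by
  obtain ⟨h1, h2, -⟩ := hp
  simp only [fkppEnergy]
  nlinarith [sq_nonneg p.1, sq_nonneg p.2]

theorem mul_sub_fkppEnergy_le_one_sub_fst {p : ℝ × ℝ} (hp : p.1 ≤ 1) :
    4 * (1 / 6 - fkppEnergy p) ≤ 1 - p.1 := by
  simp only [fkppEnergy]
  nlinarith [sq_nonneg p.2, mul_nonneg (sub_nonneg.2 hp) (sq_nonneg (2 * p.1 - 1 / 2))]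

theorem SaddleCone.shoot_mem_potentialWell {c : ℝ} (P : SaddleCone c) {s : ℝ}
    (hs : s ∈ Icc P.a P.b) : P.shoot s ∈ potentialWell := by
  have hη := P.η_pos; have := P.η_le_one; have := P.energy; have := P.a_pos
  have hs2 : s ^ 2 ≤ P.b ^ 2 := by nlinarith [hs.1, hs.2]
  refine ⟨by simp [SaddleCone.shoot]; linarith, by simp [SaddleCone.shoot]; linarith, ?_⟩
  simp only [fkppEnergy, SaddleCone.shoot]
  nlinarith [mul_pos (pow_pos hη 2) (by linarith : 0 < 1 - s ^ 2 - P.η / 3)]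

end Well

section Forward

variable {c : ℝ} {γ : ℝ → ℝ × ℝ}

theorem hasDerivAt_fkppEnergy {t : ℝ} (h : HasDerivAt γ (fkppField c (γ t)) t) :
    HasDerivAt (fun t => fkppEnergy (γ t)) (-(c * (γ t).2 ^ 2)) t := by
  have hx := h.fst
  have hy := h.snd
  simp only [fkppField] at hx hy
  refine ((hy.pow 2).div_const 2 |>.add <| ((hx.pow 2).div_const 2).sub
    ((hx.pow 3).div_const 3)).congr_deriv ?_
  push_cast; ring

variable (hγ : ∀ t, HasDerivAt γ (truncField c (γ t)) t)
include hγ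

theorem hasDerivAt_fkppField_of_mem {t : ℝ} (ht : γ t ∈ closedBall (0 : ℝ × ℝ) 1) :
    HasDerivAt γ (fkppField c (γ t)) t :=
  truncField_of_mem ht ▸ hγ t

theorem antitoneOn_fkppEnergy_comp (hc : 0 ≤ c) {I : Set ℝ} (hI : Convex ℝ I)
    (hbox : ∀ t ∈ interior I, γ t ∈ closedBall (0 : ℝ × ℝ) 1) :
    AntitoneOn (fun t => fkppEnergy (γ t)) I := by
  have hdiff : Differentiable ℝ fun t => fkppEnergy (γ t) := by
    have : Differentiable ℝ γ := fun t => (hγ t).differentiableAt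
    unfold fkppEnergy; fun_prop
  refine antitoneOn_of_deriv_nonpos hI hdiff.continuous.continuousOn
    hdiff.differentiableOn fun t ht => ?_
  rw [(hasDerivAt_fkppEnergy (hasDerivAt_fkppField_of_mem hγ (hbox t ht))).deriv]
  nlinarith [sq_nonneg (γ t).2]

theorem forall_mem_potentialWell (hc : 0 ≤ c) (h0 : γ 0 ∈ potentialWell) :
    ∀ t ≥ 0, γ t ∈ potentialWell := by
  have hγc : Continuous γ := Differentiable.continuous fun t => (hγ t).differentiableAt
  refine forall_mem_of_forall_Ico_mem hγc isOpen_potentialWell h0 fun t ht hin hcl => ?_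
  have hanti := antitoneOn_fkppEnergy_comp hγ hc (convex_Icc 0 t) fun σ hσ => by
    rw [interior_Icc] at hσ
    exact potentialWell_subset_closedBall (hin σ ⟨hσ.1.le, hσ.2⟩)
  exact mem_potentialWell_of_mem_closure hcl <|
    (hanti ⟨le_rfl, ht.le⟩ ⟨ht.le, le_rfl⟩ ht.le).trans_lt h0.2.2

theorem tendsto_snd_of_forall_mem_potentialWell (hc : 0 < c)
    (hwell : ∀ t ≥ 0, γ t ∈ potentialWell) : Tendsto (fun t => (γ t).2) atTop (𝓝 0) := by
  have hbox (t : ℝ) (ht : 0 ≤ t) := potentialWell_subset_closedBall (hwell t ht)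
  obtain ⟨L, hL⟩ := (antitoneOn_fkppEnergy_comp hγ hc.le (convex_Ici 0) fun t ht =>
    hbox t (interior_subset ht)).exists_tendsto_atTop fun t ht => fkppEnergy_nonneg (hwell t ht)
  obtain ⟨M, hM⟩ := exists_norm_truncField_le c
  have hdE := tendsto_zero_of_hasDerivAt_of_uniformContinuousOn
    (fun t ht => hasDerivAt_fkppEnergy (hasDerivAt_fkppField_of_mem hγ (hbox t ht)))
    ((lipschitzWith_of_forall_hasDerivAt hM hγ).uniformContinuous.uniformContinuousOn_comp
      (isCompact_closedBall 0 1) (h := fun p => -(c * p.2 ^ 2)) (by fun_prop) hbox)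
    hL
  have hsq : Tendsto (fun t => (γ t).2 ^ 2) atTop (𝓝 0) := by
    simpa [hc.ne'] using hdE.const_mul (-c⁻¹)
  refine (tendsto_zero_iff_abs_tendsto_zero _).2 ?_
  simpa [Real.sqrt_sq_eq_abs, comp_def] using hsq.sqrt

theorem tendsto_zero_of_forall_mem_potentialWell (hc : 0 < c)
    (hwell : ∀ t ≥ 0, γ t ∈ potentialWell) : Tendsto γ atTop (𝓝 (0, 0)) := by
  have hbox (t : ℝ) (ht : 0 ≤ t) := potentialWell_subset_closedBall (hwell t ht)
  have hy := tendsto_snd_of_forall_mem_potentialWell hγ hc hwell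
  obtain ⟨M, hM⟩ := exists_norm_truncField_le c
  have hdy := tendsto_zero_of_hasDerivAt_of_uniformContinuousOn
    (fun t ht => (hasDerivAt_fkppField_of_mem hγ (hbox t ht)).snd)
    ((lipschitzWith_of_forall_hasDerivAt hM hγ).uniformContinuous.uniformContinuousOn_comp
      (isCompact_closedBall 0 1) (h := fun p => (fkppField c p).2)
      (by unfold fkppField; fun_prop) hbox) hy
  have hxx : Tendsto (fun t => (γ t).1 * (1 - (γ t).1)) atTop (𝓝 0) := by
    simpa [fkppField] using (hy.const_mul (-c)).sub hdy
  -- the energy stays below `fkppEnergy (γ 0) < 1 / 6`, which keeps `u` away from `1`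
  obtain ⟨m, hm, hmx⟩ : ∃ m > 0, ∀ t ≥ 0, m ≤ 1 - (γ t).1 := by
    have hanti := antitoneOn_fkppEnergy_comp hγ hc.le (convex_Ici 0) fun t ht =>
      hbox t (interior_subset ht)
    refine ⟨4 * (1 / 6 - fkppEnergy (γ 0)), by linarith [(hwell 0 le_rfl).2.2], fun t ht => ?_⟩
    linarith [mul_sub_fkppEnergy_le_one_sub_fst (hwell t ht).2.1.le,
      hanti (mem_Ici.2 le_rfl) (mem_Ici.2 ht) ht]
  have hx : Tendsto (fun t => (γ t).1) atTop (𝓝 0) := by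
    refine squeeze_zero_norm' (eventually_atTop.2 ⟨0, fun t ht => ?_⟩)
      ((hxx.abs.div_const m).trans_eq (by simp))
    rw [Real.norm_eq_abs, le_div_iff₀ hm, abs_mul, abs_of_pos (hm.trans_le (hmx t ht))]
    exact mul_le_mul_of_nonneg_left (hmx t ht) (abs_nonneg _)
  simpa using hx.prodMk_nhds hy

end Forward

section Assembly

theorem exists_heteroclinic_fkppField {c : ℝ} (hc : 0 < c) :
    ∃ γ : ℝ → ℝ × ℝ, (∀ t, HasDerivAt γ (fkppField c (γ t)) t) ∧
      Tendsto γ atBot (𝓝 (1, 0)) ∧ Tendsto γ atTop (𝓝 (0, 0)) := by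
  obtain ⟨P⟩ := SaddleCone.nonempty hc
  obtain ⟨K, hK⟩ := exists_lipschitzWith_truncField c
  obtain ⟨M, hM⟩ := exists_norm_truncField_le c
  have hM' (p : ℝ × ℝ) : ‖-truncField c p‖ ≤ M := (norm_neg _).trans_le (hM p)
  choose φ hφ0 hφ using exists_forall_hasDerivAt_of_lipschitzWith hK.neg hM'
  have hφc := continuous_uncurry_of_forall_hasDerivAt hK.neg hM' hφ0 hφ
  obtain ⟨s, hs, hcone⟩ := P.exists_forall_mem_cone (B := fun s => φ (P.shoot s))
    (fun s => hφ _) (fun s => hφ0 _)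
    (hφc.comp ((by unfold SaddleCone.shoot; fun_prop : Continuous P.shoot).prodMap continuous_id))
  set γ := fun t => φ (P.shoot s) (-t)
  have hγ (t : ℝ) : HasDerivAt γ (truncField c (γ t)) t := by
    simpa [comp_def] using (hφ (P.shoot s) (-t)).scomp t (hasDerivAt_neg t)
  have hwell := forall_mem_potentialWell hγ hc.le (by
    simpa [γ, hφ0] using P.shoot_mem_potentialWell hs)
  have hbox (t : ℝ) : γ t ∈ closedBall (0 : ℝ × ℝ) 1 := by
    rcases le_total 0 t with ht | ht
    · exact potentialWell_subset_closedBall (hwell t ht)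
    · exact P.closure_cone_subset_closedBall (subset_closure (hcone (-t) (neg_nonneg.2 ht)))
  refine ⟨γ, fun t => hasDerivAt_fkppField_of_mem hγ (hbox t), ?_,
    tendsto_zero_of_forall_mem_potentialWell hγ hc hwell⟩
  exact (P.tendsto_of_forall_mem_cone (hφ _) hcone).comp tendsto_neg_atBot_atTop

theorem exists_fkpp_wave_of_unit_diffusion {c : ℝ} (hc : 0 < c) :
    ∃ u : ℝ → ℝ, ContDiff ℝ 2 u ∧
      (∀ z, deriv (deriv u) z + c * deriv u z + u z * (1 - u z) = 0) ∧
      Tendsto (fun z => (u z, deriv u z)) atBot (𝓝 (1, 0)) ∧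
      Tendsto (fun z => (u z, deriv u z)) atTop (𝓝 (0, 0)) := by
  obtain ⟨γ, hγ, hbot, htop⟩ := exists_heteroclinic_fkppField hc
  have hγ2 : ContDiff ℝ 2 γ :=
    contDiff_succ_of_forall_hasDerivAt hγ 1 (by unfold fkppField; fun_prop)
  have hu' : deriv (fun z => (γ z).1) = fun z => (γ z).2 := funext fun z => (hγ z).fst.deriv
  refine ⟨fun z => (γ z).1, contDiff_fst.comp hγ2, fun z => ?_, by simpa [hu'] using hbot,
    by simpa [hu'] using htop⟩
  rw [hu', (hγ z).snd.deriv]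
  simp only [fkppField]; ring

end Assembly

/-- For every `δ > 0` and every `c > 0` there is a heteroclinic orbit of the F-KPP
travelling-wave system connecting `(1,0)` to `(0,0)`: a `C²` solution `u` of
`δu'' + cu' + u(1−u) = 0` with `(u, u') → (1,0)` as `z → −∞` and `(u, u') → (0,0)`
as `z → +∞`. -/
theorem fkpp_heteroclinic_exists (δ c : ℝ) (hδ : 0 < δ) (hc : 0 < c) :
    ∃ u : ℝ → ℝ, ContDiff ℝ 2 u ∧
      (∀ z : ℝ, δ * deriv (deriv u) z + c * deriv u z + u z * (1 - u z) = 0) ∧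
      Tendsto (fun z => (u z, deriv u z)) atBot (nhds (1, 0)) ∧
      Tendsto (fun z => (u z, deriv u z)) atTop (nhds (0, 0)) := by
  set k := (√δ)⁻¹
  have hk : 0 < k := by positivity
  have hδk : δ * k ^ 2 = 1 := by rw [inv_pow, Real.sq_sqrt hδ.le, mul_inv_cancel₀ hδ.ne']
  obtain ⟨u, hu, hode, hbot, htop⟩ := exists_fkpp_wave_of_unit_diffusion (mul_pos hc hk)
  have hd : deriv (fun z => u (k * z)) = fun z => k * deriv u (k * z) :=
    funext fun z => by rw [deriv_comp_mul_left, smul_eq_mul]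
  have hdd (z : ℝ) : deriv (deriv fun z => u (k * z)) z = k ^ 2 * deriv (deriv u) (k * z) := by
    rw [hd, deriv_const_mul_field']
    simp only [deriv_comp_mul_left, smul_eq_mul]; ring
  have hscale : Continuous fun p : ℝ × ℝ => (p.1, k * p.2) := by fun_prop
  refine ⟨fun z => u (k * z), hu.comp (by fun_prop), fun z => ?_, ?_, ?_⟩
  · rw [hdd, hd]
    linear_combination hode (k * z) + deriv (deriv u) (k * z) * hδk
  · simpa [hd, comp_def] using (hscale.tendsto _).comp (hbot.comp (tendsto_id.const_mul_atBot hk))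
  · simpa [hd, comp_def] using (hscale.tendsto _).comp (htop.comp (tendsto_id.const_mul_atTop hk))
end

section
/- Let f, g : ℂ → ℂ be complex differentiable and nonvanishing on an open set U containing the closed disc of radius r > 0 centered at λ₀ ∈ ℂ, let E : ℂ → ℂ be complex differentiable on U, nonvanishing on the boundary circle γ of that disc, and set D := f·g·E. Then the counterclockwise circle integrals satisfy ∮_γ D'(λ)/D(λ) dλ = ∮_γ E'(λ)/E(λ) dλ. In particular the number of zeros (with multiplicity) of the Evans function D inside γ equals the winding number of E around the origin along γ. -/
/-!
On the circle `D'/D = (fg)'/(fg) + E'/E`, and `fg` is holomorphic and zero-free on a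
neighbourhood of the closed disc, so its logarithmic derivative is holomorphic there and
integrates to zero by the Cauchy–Goursat theorem.
-/

open Metric

section LogDeriv

variable {U : Set ℂ} {c : ℂ} {R : ℝ} {h u v : ℂ → ℂ}

theorem DifferentiableOn.logDeriv_of_ne_zero (hU : IsOpen U) (hh : DifferentiableOn ℂ h U)
    (hh0 : ∀ z ∈ U, h z ≠ 0) : DifferentiableOn ℂ (logDeriv h) U :=
  (hh.deriv hU).div hh hh0

theorem circleIntegrable_logDeriv (hR : 0 ≤ R) (hU : IsOpen U) (hsph : sphere c R ⊆ U)
    (hh : DifferentiableOn ℂ h U) (hh0 : ∀ z ∈ sphere c R, h z ≠ 0) :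
    CircleIntegrable (logDeriv h) c R :=
  (((hh.deriv hU).continuousOn.mono hsph).div (hh.continuousOn.mono hsph) hh0).circleIntegrable hR

theorem circleIntegral_logDeriv_eq_zero (hR : 0 ≤ R) (hU : IsOpen U)
    (hsub : closedBall c R ⊆ U) (hh : DifferentiableOn ℂ h U) (hh0 : ∀ z ∈ U, h z ≠ 0) :
    (∮ z in C(c, R), logDeriv h z) = 0 :=
  ((hh.logDeriv_of_ne_zero hU hh0).diffContOnCl_ball hsub).circleIntegral_eq_zero hR

theorem circleIntegral_logDeriv_mul (hR : 0 ≤ R) (hU : IsOpen U) (hsph : sphere c R ⊆ U)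
    (hu : DifferentiableOn ℂ u U) (hv : DifferentiableOn ℂ v U)
    (hu0 : ∀ z ∈ sphere c R, u z ≠ 0) (hv0 : ∀ z ∈ sphere c R, v z ≠ 0) :
    (∮ z in C(c, R), logDeriv (u * v) z) =
      (∮ z in C(c, R), logDeriv u z) + ∮ z in C(c, R), logDeriv v z := by
  have hsplit : Set.EqOn (logDeriv (u * v)) (fun z ↦ logDeriv u z + logDeriv v z)
      (sphere c R) := fun z hz ↦
    logDeriv_mul z (hu0 z hz) (hv0 z hz) (hu.differentiableAt (hU.mem_nhds (hsph hz)))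
      (hv.differentiableAt (hU.mem_nhds (hsph hz)))
  rw [circleIntegral.integral_congr hR hsplit]
  exact circleIntegral.integral_add (circleIntegrable_logDeriv hR hU hsph hu hu0)
    (circleIntegrable_logDeriv hR hU hsph hv hv0)

end LogDeriv

/-- If `f`, `g` are holomorphic and nonvanishing on an open set containing the closed
disc of radius `r` about `λ₀`, and `E` is holomorphic there and nonvanishing on the
boundary circle, then writing `D = f·g·E` we have `∮ D'/D = ∮ E'/E` over the circle:
the zero count of the Evans function `D` inside the circle equals the winding number
of `E` along it. -/
theorem evans_log_deriv_eq (U : Set ℂ) (hU : IsOpen U) (lam₀ : ℂ) (r : ℝ) (hr : 0 < r)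
    (hsub : Metric.closedBall lam₀ r ⊆ U)
    (f g E : ℂ → ℂ)
    (hf : DifferentiableOn ℂ f U) (hg : DifferentiableOn ℂ g U)
    (hE : DifferentiableOn ℂ E U)
    (hf0 : ∀ z ∈ U, f z ≠ 0)
    (hg0 : ∀ z ∈ U, g z ≠ 0)
    (hE0 : ∀ z ∈ Metric.sphere lam₀ r, E z ≠ 0)
    (D : ℂ → ℂ) (hD : D = f * g * E) :
    (∮ z in C(lam₀, r), deriv D z / D z) = (∮ z in C(lam₀, r), deriv E z / E z) := by
  have hsph : sphere lam₀ r ⊆ U := sphere_subset_closedBall.trans hsub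
  have hfg0 : ∀ z ∈ U, (f * g) z ≠ 0 := fun z hz ↦ mul_ne_zero (hf0 z hz) (hg0 z hz)
  change (∮ z in C(lam₀, r), logDeriv D z) = ∮ z in C(lam₀, r), logDeriv E z
  rw [hD, circleIntegral_logDeriv_mul hr.le hU hsph (hf.mul hg) hE
      (fun z hz ↦ hfg0 z (hsph hz)) hE0,
    circleIntegral_logDeriv_eq_zero hr.le hU hsub (hf.mul hg) hfg0, zero_add]
end

section
/- Let δ > 0, c > 0, let û : ℝ → ℝ be continuous, and let λ ∈ ℂ with Im λ ≠ 0. Define μ₋ᵘ(λ) := (−c + (c² + 4δ(λ+1))^{1/2})/(2δ) and μ₊ˢ(λ) := (−c − (c² + 4δ(λ−1))^{1/2})/(2δ), using the principal square root. Then there is no differentiable function η : ℝ → ℂ satisfying the F-KPP Riccati equation η'(z) = (λ − 1 + 2û(z))/δ − (c/δ)η(z) − η(z)² for all z ∈ ℝ together with lim_{z→−∞} η(z) = μ₋ᵘ(λ) and lim_{z→+∞} η(z) = μ₊ˢ(λ). In other words, the linearised F-KPP operator about a travelling wave has no eigenvalues with nonzero imaginary part. -/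
/-!
Taking imaginary parts in the Riccati equation, `v := Im η · Im λ` satisfies `v' = (Im λ)² / δ > 0`
wherever `v = 0`, so `v` can never pass from positive to negative values. But the principal square
root of `w` has imaginary part of the same sign as `Im w`, which makes the limit of `v` at `-∞`
positive and its limit at `+∞` negative.
-/

open Filter

theorem Complex.im_cpow_half_mul_im_pos {w : ℂ} (hw : w.im ≠ 0) :
    0 < (w ^ ((1 : ℂ) / 2)).im * w.im := by
  rw [one_div]
  set s := w ^ (2⁻¹ : ℂ)
  have hre : 0 ≤ 2 * s.re := by rw [Complex.cpow_inv_two_re]; positivity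
  have him : w.im = 2 * s.re * s.im := by
    rw [← Complex.cpow_ofNat_inv_pow w 2, sq, Complex.mul_im]; ring
  obtain ⟨hre0, him0⟩ := mul_ne_zero_iff.1 (him ▸ hw)
  calc 0 < 2 * s.re * s.im ^ 2 := mul_pos (hre.lt_of_ne' hre0) (by positivity)
    _ = s.im * w.im := by rw [him]; ring

theorem HasDerivAt.complex_im {f : ℝ → ℂ} {f' : ℂ} {x : ℝ} (h : HasDerivAt f f' x) :
    HasDerivAt (fun x => (f x).im) f'.im x :=
  Complex.imCLM.hasFDerivAt.comp_hasDerivAt x h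

section NoDownCrossing

variable {v v' : ℝ → ℝ} (hv : ∀ x, HasDerivAt v (v' x) x) (hv' : ∀ x, v x = 0 → 0 < v' x)
include hv hv'

theorem nonneg_of_hasDerivAt_pos_of_eq_zero {a b : ℝ} (hab : a ≤ b) (ha : 0 ≤ v a) :
    0 ≤ v b := by
  have hcont : Continuous v := continuous_iff_continuousAt.2 fun x => (hv x).continuousAt
  have := image_le_of_deriv_right_lt_deriv_boundary' (f := fun x => -v x) (f' := fun x => -v' x)
    (B := fun _ => 0) (B' := fun _ => 0) hcont.neg.continuousOn
    (fun x _ => (hv x).neg.hasDerivWithinAt) (by simpa using ha) continuousOn_const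
    (fun x _ => hasDerivWithinAt_const _ _ _)
    (fun x _ hx => by simpa using hv' x (neg_eq_zero.1 hx)) ⟨hab, le_rfl⟩
  simpa using this

theorem not_tendsto_pos_atBot_neg_atTop {L₁ L₂ : ℝ} (hL₁ : 0 < L₁) (hL₂ : L₂ < 0)
    (h₁ : Tendsto v atBot (nhds L₁)) (h₂ : Tendsto v atTop (nhds L₂)) : False := by
  obtain ⟨a, ha⟩ := (h₁.eventually (eventually_gt_nhds hL₁)).exists
  obtain ⟨b, hb, hab⟩ :=
    ((h₂.eventually (eventually_lt_nhds hL₂)).and (eventually_ge_atTop a)).exists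
  exact hb.not_ge (nonneg_of_hasDerivAt_pos_of_eq_zero hv hv' hab ha.le)

end NoDownCrossing

theorem fkpp_no_complex_eigenvalues_general (δ c : ℝ) (hδ : 0 < δ)
    (u : ℝ → ℝ) (lam : ℂ) (hlam : lam.im ≠ 0) :
    ¬ ∃ η : ℝ → ℂ,
      (∀ z : ℝ, HasDerivAt η
        ((lam - 1 + 2 * (u z : ℂ)) / (δ : ℂ) - ((c : ℂ) / (δ : ℂ)) * η z - (η z)^2) z) ∧
      Tendsto η atBot
        (nhds ((-(c : ℂ) + ((c : ℂ)^2 + 4*(δ : ℂ)*(lam + 1)) ^ ((1 : ℂ)/2)) / (2*(δ : ℂ)))) ∧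
      Tendsto η atTop
        (nhds ((-(c : ℂ) - ((c : ℂ)^2 + 4*(δ : ℂ)*(lam - 1)) ^ ((1 : ℂ)/2)) / (2*(δ : ℂ)))) := by
  rintro ⟨η, hη, hbot, htop⟩
  have hδ' : 2 * (δ : ℂ) = ((2 * δ : ℝ) : ℂ) := by push_cast; ring
  have hsqrt (w : ℂ) (hw : w.im = 4 * δ * lam.im) : 0 < (w ^ ((1 : ℂ) / 2)).im * lam.im := by
    have h := Complex.im_cpow_half_mul_im_pos (hw ▸ mul_ne_zero (by positivity) hlam)
    rw [hw] at h
    exact pos_of_mul_pos_right (by linarith : 0 < 4 * δ * ((w ^ ((1 : ℂ) / 2)).im * lam.im))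
      (by positivity)
  refine not_tendsto_pos_atBot_neg_atTop (fun z => (hη z).complex_im.mul_const lam.im)
    (fun z hz => ?_) ?_ ?_
    ((Complex.continuous_im.tendsto _).comp hbot |>.mul_const lam.im)
    ((Complex.continuous_im.tendsto _).comp htop |>.mul_const lam.im)
  · have hz : (η z).im = 0 := (mul_eq_zero.1 hz).resolve_right hlam
    have hrhs : ((lam - 1 + 2 * (u z : ℂ)) / (δ : ℂ) - ((c : ℂ) / (δ : ℂ)) * η z - (η z)^2).im
        = lam.im / δ := by
      simp [Complex.div_ofReal_im, hz, sq]
    rw [hrhs, div_mul_eq_mul_div]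
    exact div_pos (mul_self_pos.2 hlam) hδ
  · rw [hδ', Complex.div_ofReal_im, div_mul_eq_mul_div, Complex.add_im, Complex.neg_im,
      Complex.ofReal_im, neg_zero, zero_add]
    exact div_pos (hsqrt _ (by simp [sq])) (by positivity)
  · rw [hδ', Complex.div_ofReal_im, div_mul_eq_mul_div, Complex.sub_im, Complex.neg_im,
      Complex.ofReal_im, neg_zero, zero_sub, neg_mul]
    exact div_neg_of_neg_of_pos (neg_neg_of_pos (hsqrt _ (by simp [sq]))) (by positivity)

/-- No eigenvalues of the linearised F-KPP operator with nonzero imaginary part: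
for `Im λ ≠ 0` there is no solution of the Riccati equation
`η' = (λ − 1 + 2û)/δ − (c/δ)η − η²` connecting `μ₋ᵘ(λ)` at `−∞` to `μ₊ˢ(λ)` at `+∞`,
where the `μ`'s are defined via the principal square root. -/
theorem fkpp_no_complex_eigenvalues (δ c : ℝ) (hδ : 0 < δ) (hc : 0 < c)
    (u : ℝ → ℝ) (hu : Continuous u) (lam : ℂ) (hlam : lam.im ≠ 0) :
    ¬ ∃ η : ℝ → ℂ,
      (∀ z : ℝ, HasDerivAt η
        ((lam - 1 + 2 * (u z : ℂ)) / (δ : ℂ) - ((c : ℂ) / (δ : ℂ)) * η z - (η z)^2) z) ∧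
      Tendsto η atBot
        (nhds ((-(c : ℂ) + ((c : ℂ)^2 + 4*(δ : ℂ)*(lam + 1)) ^ ((1 : ℂ)/2)) / (2*(δ : ℂ)))) ∧
      Tendsto η atTop
        (nhds ((-(c : ℂ) - ((c : ℂ)^2 + 4*(δ : ℂ)*(lam - 1)) ^ ((1 : ℂ)/2)) / (2*(δ : ℂ)))) :=
  fkpp_no_complex_eigenvalues_general δ c hδ u lam hlam
end

section
/- Let α, β, c, δ be positive reals with δ < β, set γ := δ/(β−δ) and σ := α(β−δ)/c², and define ū(z) := (1 + σe^{−cz/δ})^{−γ} and w̄(z) := e^{−cz/δ}·ū(z)^{β/δ} for z ∈ ℝ. Then ū and w̄ are smooth, strictly positive, and satisfy for every z ∈ ℝ the Keller–Segel travelling-wave equations: c·ū'(z) − α·w̄(z) = 0, and δ·w̄''(z) + (αβ/c)·( ū'(z)·w̄(z)²/ū(z)² − 2·w̄(z)·w̄'(z)/ū(z) ) + c·w̄'(z) = 0. -/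
/-- The explicit profiles `ū(z) = (1 + σe^{−cz/δ})^{−γ}` and
`w̄(z) = e^{−cz/δ}·ū(z)^{β/δ}`, with `γ = δ/(β−δ)` and `σ = α(β−δ)/c²`, are smooth,
strictly positive, and satisfy the Keller–Segel travelling-wave equations
`cū' − αw̄ = 0` and `δw̄'' + (αβ/c)(ū'w̄²/ū² − 2w̄w̄'/ū) + cw̄' = 0`. -/
theorem keller_segel_explicit_solution (α β c δ : ℝ)
    (hα : 0 < α) (hβ : 0 < β) (hc : 0 < c) (hδ : 0 < δ) (hδβ : δ < β)
    (γ σ : ℝ) (hγ : γ = δ / (β - δ)) (hσ : σ = α * (β - δ) / c^2)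
    (ubar wbar : ℝ → ℝ)
    (hu : ubar = fun z : ℝ => (1 + σ * Real.exp (-c * z / δ)) ^ (-γ))
    (hw : wbar = fun z : ℝ => Real.exp (-c * z / δ) * (ubar z) ^ (β / δ)) :
    ContDiff ℝ (⊤ : ℕ∞) ubar ∧ ContDiff ℝ (⊤ : ℕ∞) wbar ∧
    (∀ z : ℝ, 0 < ubar z) ∧ (∀ z : ℝ, 0 < wbar z) ∧
    (∀ z : ℝ, c * deriv ubar z - α * wbar z = 0) ∧
    (∀ z : ℝ, δ * deriv (deriv wbar) z
      + (α * β / c) * (deriv ubar z * (wbar z)^2 / (ubar z)^2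
          - 2 * wbar z * deriv wbar z / ubar z)
      + c * deriv wbar z = 0) := by
  have hβδ : (0:ℝ) < β - δ := sub_pos.2 hδβ
  have hδ' : δ ≠ 0 := hδ.ne'
  have hc' : c ≠ 0 := hc.ne'
  have hσpos : 0 < σ := by rw [hσ]; positivity
  set E : ℝ → ℝ := fun z => Real.exp (-c * z / δ) with hEdef
  set F : ℝ → ℝ := fun z => 1 + σ * E z with hFdef
  have hEpos : ∀ z, 0 < E z := fun z => Real.exp_pos _
  have hFpos : ∀ z, 0 < F z := fun z => by
    have := hEpos z; simp only [hFdef]; positivity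
  set k : ℝ := γ + 1 with hk
  have hγpos : 0 < γ := by rw [hγ]; positivity
  have hγβ : γ * (β / δ) = k := by
    rw [hγ, hk, hγ]; field_simp; ring
  -- basic derivatives
  have hE : ∀ z, HasDerivAt E (-(c/δ) * E z) z := by
    intro z
    have h1 : HasDerivAt (fun z : ℝ => -c * z / δ) (-c / δ) z := by
      simpa using ((hasDerivAt_id z).const_mul (-c)).div_const δ
    have := h1.exp
    simpa [hEdef, mul_comm, neg_div] using this
  have hF : ∀ z, HasDerivAt F (σ * (-(c/δ) * E z)) z := by
    intro z
    simpa [hFdef] using ((hE z).const_mul σ).const_add 1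
  have hFrpow : ∀ (p : ℝ) (z : ℝ),
      HasDerivAt (fun z => F z ^ p) (p * F z ^ (p - 1) * (σ * (-(c/δ) * E z))) z := by
    intro p z
    exact (Real.hasDerivAt_rpow_const (Or.inl (hFpos z).ne')).comp z (hF z)
  -- ubar in terms of F
  have hu' : ubar = fun z => F z ^ (-γ) := hu
  have hupos : ∀ z, 0 < ubar z := fun z => by
    rw [hu']; exact Real.rpow_pos_of_pos (hFpos z) _
  -- wbar = E * F ^ (-k)
  have hwF : wbar = fun z => E z * F z ^ (-k) := by
    funext z
    rw [hw, hu']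
    simp only
    rw [← Real.rpow_mul (hFpos z).le, show -γ * (β/δ) = -k by rw [← hγβ]; ring]
  have hwpos : ∀ z, 0 < wbar z := fun z => by
    rw [hwF]; exact mul_pos (hEpos z) (Real.rpow_pos_of_pos (hFpos z) _)
  -- smoothness
  have hEc : ContDiff ℝ (⊤ : ℕ∞) E := by
    apply Real.contDiff_exp.comp
    exact (contDiff_const.mul contDiff_id).div_const δ
  have hFc : ContDiff ℝ (⊤ : ℕ∞) F := contDiff_const.add (contDiff_const.mul hEc)
  have huc : ContDiff ℝ (⊤ : ℕ∞) ubar := by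
    rw [hu']
    exact hFc.rpow_const_of_ne fun z => (hFpos z).ne'
  have hwc : ContDiff ℝ (⊤ : ℕ∞) wbar := by
    rw [hwF]
    exact hEc.mul (hFc.rpow_const_of_ne fun z => (hFpos z).ne')
  -- derivative of ubar
  have hud : ∀ z, HasDerivAt ubar (γ * σ * (c/δ) * E z * F z ^ (-γ - 1)) z := by
    intro z
    rw [hu']
    have := hFrpow (-γ) z
    convert this using 1
    ring
  -- derivative of wbar
  set W1 : ℝ → ℝ := fun z =>
    -(c/δ) * (E z * F z ^ (-k)) + k * σ * (c/δ) * (E z ^ 2 * F z ^ (-k - 1)) with hW1def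
  have hwd : ∀ z, HasDerivAt wbar (W1 z) z := by
    intro z
    rw [hwF]
    have := (hE z).mul (hFrpow (-k) z)
    refine this.congr_deriv ?_
    simp only [hW1def]
    ring
  set W2 : ℝ → ℝ := fun z =>
    (c/δ)^2 * E z * F z ^ (-k) - 3 * k * σ * (c/δ)^2 * (E z)^2 * F z ^ (-k - 1)
      + k * (k+1) * σ^2 * (c/δ)^2 * (E z)^3 * F z ^ (-k - 2) with hW2def
  have hwdd : ∀ z, HasDerivAt W1 (W2 z) z := by
    intro z
    have h1 := ((hE z).mul (hFrpow (-k) z)).const_mul (-(c/δ))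
    have h2 := (((hE z).pow 2).mul (hFrpow (-k - 1) z)).const_mul (k * σ * (c/δ))
    have h := h1.add h2
    refine h.congr_deriv ?_
    simp only [hW2def, Pi.pow_apply]
    push_cast
    rw [show (-k - 1 - 1 : ℝ) = -k - 2 by ring]
    ring
  have hderivu : ∀ z, deriv ubar z = γ * σ * (c/δ) * E z * F z ^ (-γ - 1) :=
    fun z => (hud z).deriv
  have hderivw : deriv wbar = W1 := funext fun z => (hwd z).deriv
  have hderivw2 : ∀ z, deriv (deriv wbar) z = W2 z := fun z => by
    rw [hderivw]; exact (hwdd z).deriv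
  refine ⟨huc, hwc, hupos, hwpos, ?_, ?_⟩
  · intro z
    rw [hderivu, hwF, show (-γ - 1 : ℝ) = -k by rw [hk]; ring]
    have hcoeff : c * (γ * σ * (c/δ)) = α := by
      rw [hγ, hσ]; field_simp
    have : c * (γ * σ * (c/δ) * E z * F z ^ (-k)) - α * (E z * F z ^ (-k))
        = (c * (γ * σ * (c/δ)) - α) * (E z * F z ^ (-k)) := by ring
    rw [this, hcoeff]; ring
  · intro z
    rw [hderivw2, hderivw, hderivu, hwF, hu']
    simp only [hW1def, hW2def]
    -- rewrite rpow exponents in terms of U = F z ^ (-γ) and (F z)⁻¹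
    have hFz := hFpos z
    have e1 : F z ^ (-k) = F z ^ (-γ) * (F z)⁻¹ := by
      rw [show (-k : ℝ) = -γ + (-1) by rw [hk]; ring, Real.rpow_add hFz,
        Real.rpow_neg_one]
    have e2 : F z ^ (-k - 1) = F z ^ (-γ) * (F z)⁻¹ * (F z)⁻¹ := by
      rw [show (-k - 1 : ℝ) = -γ + (-1) + (-1) by rw [hk]; ring,
        Real.rpow_add hFz, Real.rpow_add hFz, Real.rpow_neg_one]
    have e3 : F z ^ (-k - 2) = F z ^ (-γ) * (F z)⁻¹ * (F z)⁻¹ * (F z)⁻¹ := by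
      rw [show (-k - 2 : ℝ) = -γ + (-1) + (-1) + (-1) by rw [hk]; ring,
        Real.rpow_add hFz, Real.rpow_add hFz, Real.rpow_add hFz, Real.rpow_neg_one]
    have e4 : F z ^ (-γ - 1) = F z ^ (-γ) * (F z)⁻¹ := by
      rw [show (-γ - 1 : ℝ) = -γ + (-1) by ring, Real.rpow_add hFz, Real.rpow_neg_one]
    rw [e1, e2, e3, e4]
    have hUpos : 0 < F z ^ (-γ) := Real.rpow_pos_of_pos hFz _
    have hkval : k = β / (β - δ) := by rw [hk, hγ]; field_simp; ring
    rw [hγ, hσ, hkval]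
    have hβδ' : β - δ ≠ 0 := hβδ.ne'
    field_simp
    ring
end

section
/- Let u¹ = (u¹₁,u¹₂,u¹₃), u² = (u²₁,u²₂,u²₃) and s = (s₁,s₂,s₃) be vectors in ℂ³. Suppose Δ := u¹₁u²₂ − u¹₂u²₁ ≠ 0 and s₂ ≠ 0. Define η₃ := s₁/s₂, η₄ := s₃/s₂, κ₅ := −(u¹₂u²₃ − u¹₃u²₂)/Δ, and κ₆ := (u¹₁u²₃ − u¹₃u²₁)/Δ. Then the determinant of the 3×3 matrix with columns u¹, u², s satisfies det[u¹ u² s] / (Δ·s₂) = η₄ − κ₆ − η₃·κ₅. -/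
open Matrix

theorem Matrix.det_fin_three_eq_expansion_last_col {R : Type*} [CommRing R]
    (a b x c d y e f z : R) :
    det !![a, b, x; c, d, y; e, f, z] =
      z * (a * d - c * b) - y * (a * f - e * b) + x * (c * f - e * d) := by
  rw [det_fin_three]
  simp only [of_apply, cons_val', cons_val_zero, cons_val_one, cons_val_two, empty_val',
    cons_val_fin_one, tail_cons, vecHead]
  ring

/-- Algebraic identity relating the Evans function determinant `det[u¹ u² s]` to the
Riccati Evans function: with `Δ = u¹₁u²₂ − u¹₂u²₁ ≠ 0`, `s₂ ≠ 0`,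
`η₃ = s₁/s₂`, `η₄ = s₃/s₂`, `κ₅ = −(u¹₂u²₃ − u¹₃u²₂)/Δ`, `κ₆ = (u¹₁u²₃ − u¹₃u²₁)/Δ`,
we have `det[u¹ u² s]/(Δ·s₂) = η₄ − κ₆ − η₃κ₅`. -/
theorem evans_riccati_determinant_identity
    (u₁₁ u₁₂ u₁₃ u₂₁ u₂₂ u₂₃ s₁ s₂ s₃ : ℂ)
    (Δ : ℂ) (hΔdef : Δ = u₁₁ * u₂₂ - u₁₂ * u₂₁) (hΔ : Δ ≠ 0) (hs₂ : s₂ ≠ 0)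
    (η₃ η₄ κ₅ κ₆ : ℂ)
    (hη₃ : η₃ = s₁ / s₂) (hη₄ : η₄ = s₃ / s₂)
    (hκ₅ : κ₅ = -(u₁₂ * u₂₃ - u₁₃ * u₂₂) / Δ)
    (hκ₆ : κ₆ = (u₁₁ * u₂₃ - u₁₃ * u₂₁) / Δ) :
    Matrix.det !![u₁₁, u₂₁, s₁; u₁₂, u₂₂, s₂; u₁₃, u₂₃, s₃] / (Δ * s₂) =
      η₄ - κ₆ - η₃ * κ₅ := by
  rw [det_fin_three_eq_expansion_last_col, ← hΔdef, hη₃, hη₄, hκ₅, hκ₆]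
  field_simp
  ring
end
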